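/- Let f be a Fibonacci map. Then the forward critical orbit is contained in the union of the closed intervals with endpoints d_n and y_n: for every m ≥ 1 there exists n ≥ 0 such that f^m(c) lies in the closed interval with endpoints d_n = f^{S_n}(c) and y_n = f^{S_n+S_{n+2}}(c). Specifically, one may take n such that S_n is the leading summand of the Fibonacci sum expression of m. -/

import Mathlib

noncomputable section

/-- The Fibonacci numbers `S 0 = 1`, `S 1 = 2`, `S (k+2) = S (k+1) + S k`. -/
def fibS : ℕ → ℕ
  | 0 => 1
  | 1 => 2
  | n + 2 => fibS (n + 1) + fibS n

/-- `f : [0,1] → [0,1]` is unimodal with critical point `c`: continuous, maps `[0,1]` into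
itself, `f 0 = f 1 = 0`, `c ∈ (0,1)`, strictly increasing on `[0,c]`, strictly decreasing
on `[c,1]`. -/
def IsUnimodal (f : ℝ → ℝ) (c : ℝ) : Prop :=
  ContinuousOn f (Set.Icc 0 1) ∧ Set.MapsTo f (Set.Icc 0 1) (Set.Icc 0 1) ∧
  f 0 = 0 ∧ f 1 = 0 ∧ c ∈ Set.Ioo (0 : ℝ) 1 ∧
  StrictMonoOn f (Set.Icc 0 c) ∧ StrictAntiOn f (Set.Icc c 1)

/-- `f` is symmetric about `c`: `f (2c - x) = f x` whenever both points lie in `[0,1]`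
(the symmetric point of `x` is `x̂ = 2c - x`). -/
def SymmetricAbout (f : ℝ → ℝ) (c : ℝ) : Prop :=
  ∀ x ∈ Set.Icc (0 : ℝ) 1, 2 * c - x ∈ Set.Icc (0 : ℝ) 1 → f (2 * c - x) = f x

/-- The distance from `c` to a nearest `k`-th preimage `c₋ₖ` of `c` in `[0,1]`,
i.e. `|c₋ₖ - c| = |c₋ₖ|`. -/
def preimDist (f : ℝ → ℝ) (c : ℝ) (k : ℕ) : ℝ :=
  sInf ((fun x => |x - c|) '' {x | x ∈ Set.Icc (0 : ℝ) 1 ∧ f^[k] x = c})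

/-- `S` is the sequence of cutting times of `f`: `S 0 = 1`, and `S (i+1)` is the least
`k ≥ S i` for which the nearest `k`-th preimage `c₋ₖ` of `c` lies in the symmetric open
interval `(c₋ₛᵢ, (c₋ₛᵢ)^)`, i.e. `c₋ₖ` exists and is strictly closer to `c` than `c₋ₛᵢ`. -/
def IsCuttingSeq (f : ℝ → ℝ) (c : ℝ) (S : ℕ → ℕ) : Prop :=
  S 0 = 1 ∧ ∀ i, IsLeast {k | S i ≤ k ∧
    ({x | x ∈ Set.Icc (0 : ℝ) 1 ∧ f^[k] x = c}).Nonempty ∧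
    preimDist f c k < preimDist f c (S i)} (S (i + 1))

/-- A Fibonacci map: a symmetric unimodal map whose cutting times are exactly the
Fibonacci numbers `1, 2, 3, 5, 8, …`. -/
def IsFibonacciMap (f : ℝ → ℝ) (c : ℝ) : Prop :=
  IsUnimodal f c ∧ SymmetricAbout f c ∧ IsCuttingSeq f c fibS

/-- `l` is the Fibonacci sum expression of `m`: a nonempty list of indices
`k₁, k₂, …` with `k_{i+1} ≥ k_i + 2` for each `i`, with `S_{k₁} + S_{k₂} + ⋯ = m`.
The leading summand is `fibS n` where `l.head? = some n`. -/
def IsFibExpansion (l : List ℕ) (m : ℕ) : Prop :=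
  l ≠ [] ∧ l.Chain' (fun a b => a + 2 ≤ b) ∧ (l.map fibS).sum = m

/-!
Write `ζₖ` for `preimDist f c k`. Symmetry forces `c = 1/2`, so every point can be reflected into
`[c, 1]` without changing its images. Minimality of the cutting times makes `c + ζ_{Sₙ}` an
`Sₙ`-preimage of `c` and `f^{Sₙ}` strictly monotone on `[c, c + ζ_{Sₙ}]`, since no earlier iterate
of that interval meets `c`. Comparing preimages along these branches, using
`S_{n+2} = S_{n+1} + Sₙ` and `S_{n+3} > Sₙ + S_{n+2}`, gives
`|d_{n+2} - c| < ζ_{Sₙ} < |d_{n+1} - c|`.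
Consequently `f^{Sₙ}` maps every point at most `|d_{n+2} - c|` away from `c` into `[dₙ, yₙ]`, and
`yₙ` lies between `dₙ` and `c`. Writing `m = S_k + m'` with the expansion of `m'` led by an index
`≥ k + 2`, induction puts `f^{m'}(c)` within `|d_{k+2} - c|` of `c`, hence `f^m(c)` in `[d_k, y_k]`.
Every `m ≥ 1` has such an expansion by Zeckendorf's theorem.
-/

open Set

variable {f : ℝ → ℝ} {c : ℝ} {S : ℕ → ℕ}

theorem fibS_eq_fib : ∀ n, fibS n = Nat.fib (n + 2)
  | 0 => rfl
  | 1 => rfl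
  | n + 2 => by
    rw [fibS, fibS_eq_fib (n + 1), fibS_eq_fib n, Nat.fib_add_two (n := n + 2), add_comm]

theorem exists_isFibExpansion {m : ℕ} (hm : 1 ≤ m) : ∃ l, IsFibExpansion l m := by
  set L := Nat.zeckendorf m
  have hL : (L ++ [0]).IsChain (fun a b => b + 2 ≤ a) := Nat.isZeckendorfRep_zeckendorf m
  have htrans : Trans (fun a b : ℕ => b + 2 ≤ a) (fun a b => b + 2 ≤ a) (fun a b => b + 2 ≤ a) :=
    ⟨fun h₁ h₂ => by omega⟩
  have htwo : ∀ a ∈ L, 2 ≤ a := fun a ha =>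
    (List.pairwise_append.mp hL.pairwise).2.2 a ha 0 (List.mem_singleton_self 0)
  have hsum : (L.map Nat.fib).sum = m := Nat.sum_zeckendorf_fib m
  refine ⟨(L.map (· - 2)).reverse, fun h => ?_, ?_, ?_⟩
  · rw [show L = [] by simpa using h] at hsum
    simp only [List.map_nil, List.sum_nil] at hsum
    omega
  · show List.IsChain _ _
    rw [List.isChain_reverse, List.isChain_map]
    exact hL.left_of_append.imp_of_mem_imp fun a b _ hb hab => by have := htwo b hb; omega
  · rw [List.map_reverse, List.sum_reverse, List.map_map, ← hsum]
    refine congrArg List.sum (List.map_congr_left fun a ha => ?_)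
    rw [Function.comp_apply, fibS_eq_fib, Nat.sub_add_cancel (htwo a ha)]

theorem exists_mem_uIcc_abs_sub_eq {d c E : ℝ} (hE : 0 ≤ E) (h : E ≤ |d - c|) :
    ∃ w ∈ uIcc d c, |w - c| = E := by
  rcases le_total c d with hcd | hdc
  · rw [abs_of_nonneg (sub_nonneg.mpr hcd)] at h
    exact ⟨c + E, mem_uIcc.mpr (Or.inr ⟨by linarith, by linarith⟩), by simp [abs_of_nonneg hE]⟩
  · rw [abs_of_nonpos (sub_nonpos.mpr hdc)] at h
    exact ⟨c - E, mem_uIcc.mpr (Or.inl ⟨by linarith, by linarith⟩), by simp [abs_of_nonneg hE]⟩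

theorem abs_sub_lt_of_mem_uIcc_of_ne {a b x : ℝ} (hx : x ∈ uIcc a b) (hne : x ≠ a) :
    |x - b| < |a - b| := by
  rcases mem_uIcc.mp hx with ⟨hax, hxb⟩ | ⟨hbx, hxa⟩
  · rw [abs_of_nonpos (by linarith), abs_of_nonpos (by linarith)]
    linarith [lt_of_le_of_ne hax hne.symm]
  · rw [abs_of_nonneg (by linarith), abs_of_nonneg (by linarith)]
    linarith [lt_of_le_of_ne hxa hne]

theorem subset_Icc_or_subset_Icc_of_isPreconnected {s : Set ℝ} {a b c : ℝ}
    (hs : IsPreconnected s) (hsub : s ⊆ Icc a b) (hc : c ∉ s) :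
    s ⊆ Icc a c ∨ s ⊆ Icc c b := by
  have hsplit : s ⊆ Iio c ∪ Ioi c := fun x hx =>
    (lt_or_gt_of_ne fun hxc : x = c => hc (hxc ▸ hx) : x < c ∨ c < x)
  rcases hs.subset_or_subset isOpen_Iio isOpen_Ioi Ioi_disjoint_Iio_same.symm hsplit with h | h
  · exact Or.inl fun x hx => ⟨(hsub hx).1, (h hx).le⟩
  · exact Or.inr fun x hx => ⟨(h hx).le, (hsub hx).2⟩

def critPreimages (f : ℝ → ℝ) (c : ℝ) (k : ℕ) : Set ℝ :=
  {x | x ∈ Icc (0 : ℝ) 1 ∧ f^[k] x = c}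

theorem preimDist_nonneg (k : ℕ) : 0 ≤ preimDist f c k :=
  Real.sInf_nonneg (by rintro _ ⟨x, -, rfl⟩; exact abs_nonneg _)

theorem preimDist_le {k : ℕ} {x : ℝ} (hx : x ∈ critPreimages f c k) :
    preimDist f c k ≤ |x - c| :=
  csInf_le ⟨0, by rintro _ ⟨y, -, rfl⟩; exact abs_nonneg _⟩ ⟨x, hx, rfl⟩

namespace IsUnimodal

theorem mem_Icc (hf : IsUnimodal f c) : c ∈ Icc (0 : ℝ) 1 := Ioo_subset_Icc_self hf.2.2.2.2.1

theorem iterate_mem_Icc (hf : IsUnimodal f c) (k : ℕ) : f^[k] c ∈ Icc (0 : ℝ) 1 :=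
  hf.2.1.iterate k hf.mem_Icc

theorem continuousOn_iterate (hf : IsUnimodal f c) (k : ℕ) : ContinuousOn f^[k] (Icc 0 1) := by
  induction k with
  | zero => exact continuousOn_id
  | succ k ih =>
    rw [Function.iterate_succ']
    exact hf.1.comp ih (hf.2.1.iterate k)

theorem eq_half (hf : IsUnimodal f c) (hs : SymmetricAbout f c) : c = 1 / 2 := by
  obtain ⟨-, -, hf0, hf1, ⟨hc0, hc1⟩, hmono, hanti⟩ := hf
  rcases lt_trichotomy c (1 / 2) with h | h | h
  · have hsym : f (2 * c - 0) = f 0 := hs 0 ⟨le_rfl, zero_le_one⟩ ⟨by linarith, by linarith⟩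
    have hlt : f 1 < f (2 * c - 0) :=
      hanti ⟨by linarith, by linarith⟩ ⟨hc1.le, le_rfl⟩ (by linarith)
    linarith
  · exact h
  · have hsym : f (2 * c - 1) = f 1 := hs 1 ⟨zero_le_one, le_rfl⟩ ⟨by linarith, by linarith⟩
    have hlt : f 0 < f (2 * c - 1) :=
      hmono ⟨le_rfl, hc0.le⟩ ⟨by linarith, by linarith⟩ (by linarith)
    linarith

theorem add_abs_sub_mem_Icc (hf : IsUnimodal f c) (hs : SymmetricAbout f c) {x : ℝ}
    (hx : x ∈ Icc (0 : ℝ) 1) : c + |x - c| ∈ Icc (0 : ℝ) 1 := by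
  have hc := hf.eq_half hs
  constructor <;> cases abs_cases (x - c) <;> linarith [hx.1, hx.2]

theorem iterate_add_abs_sub (hf : IsUnimodal f c) (hs : SymmetricAbout f c) {x : ℝ}
    (hx : x ∈ Icc (0 : ℝ) 1) {k : ℕ} (hk : 1 ≤ k) : f^[k] (c + |x - c|) = f^[k] x := by
  obtain ⟨k, rfl⟩ := Nat.exists_eq_add_of_le' hk
  rw [Function.iterate_succ_apply, Function.iterate_succ_apply]
  congr 1
  rcases le_or_gt c x with h | h
  · rw [abs_of_nonneg (sub_nonneg.mpr h), add_sub_cancel]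
  · have hc := hf.eq_half hs
    rw [abs_of_neg (sub_neg.mpr h), ← hs x hx ⟨by linarith [hx.2], by linarith [hx.1]⟩]
    ring_nf

theorem exists_abs_sub_eq_preimDist (hf : IsUnimodal f c) {k : ℕ}
    (hne : (critPreimages f c k).Nonempty) :
    ∃ x ∈ critPreimages f c k, |x - c| = preimDist f c k := by
  have hclosed : IsClosed (critPreimages f c k) :=
    (hf.continuousOn_iterate k).preimage_isClosed_of_isClosed isClosed_Icc isClosed_singleton
  have hcompact : IsCompact ((|· - c|) '' critPreimages f c k) :=
    (isCompact_Icc.of_isClosed_subset hclosed fun _ hx => hx.1).image (by fun_prop)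
  exact hcompact.sInf_mem (hne.image _)

theorem strictMonoOn_or_strictAntiOn_iterate (hf : IsUnimodal f c) {J : Set ℝ} {N : ℕ}
    (hJ : ∀ i < N, MapsTo f^[i] J (Icc 0 c) ∨ MapsTo f^[i] J (Icc c 1)) :
    StrictMonoOn f^[N] J ∨ StrictAntiOn f^[N] J := by
  induction N with
  | zero => exact Or.inl strictMonoOn_id
  | succ N ih =>
    have hmono : StrictMonoOn f (Icc 0 c) := hf.2.2.2.2.2.1
    have hanti : StrictAntiOn f (Icc c 1) := hf.2.2.2.2.2.2
    rw [Function.iterate_succ']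
    rcases ih fun i hi => hJ i (by omega) with h | h <;> rcases hJ N (by omega) with hm | hm
    · exact Or.inl (hmono.comp h hm)
    · exact Or.inr (hanti.comp_strictMonoOn h hm)
    · exact Or.inr (hmono.comp_strictAntiOn h hm)
    · exact Or.inl (hanti.comp h hm)

theorem mapsTo_iterate_Icc_left_or_right (hf : IsUnimodal f c) {J : Set ℝ} (hJ : IsPreconnected J)
    (hJ01 : J ⊆ Icc 0 1) {i : ℕ} (hi : ∀ x ∈ J, f^[i] x ≠ c) :
    MapsTo f^[i] J (Icc 0 c) ∨ MapsTo f^[i] J (Icc c 1) := by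
  simp only [mapsTo_iff_image_subset]
  exact subset_Icc_or_subset_Icc_of_isPreconnected
    (hJ.image _ ((hf.continuousOn_iterate i).mono hJ01))
    ((hf.2.1.iterate i).mono_left hJ01).image_subset
    fun ⟨x, hx, hxc⟩ => hi x hx hxc

end IsUnimodal

namespace IsCuttingSeq

theorem preimDist_succ_lt (hS : IsCuttingSeq f c S) (i : ℕ) :
    preimDist f c (S (i + 1)) < preimDist f c (S i) :=
  (hS.2 i).1.2.2

theorem preimDist_pos (hS : IsCuttingSeq f c S) (i : ℕ) : 0 < preimDist f c (S i) :=
  (preimDist_nonneg _).trans_lt (hS.preimDist_succ_lt i)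

theorem strictAnti_preimDist (hS : IsCuttingSeq f c S) : StrictAnti fun i => preimDist f c (S i) :=
  strictAnti_nat_of_succ_lt hS.preimDist_succ_lt

theorem strictMono (hS : IsCuttingSeq f c S) : StrictMono S :=
  strictMono_nat_of_lt_succ fun i =>
    (hS.2 i).1.1.lt_of_ne fun h => (hS.preimDist_succ_lt i).ne (by rw [h])

theorem one_le (hS : IsCuttingSeq f c S) (i : ℕ) : 1 ≤ S i :=
  hS.1 ▸ hS.strictMono.monotone (Nat.zero_le i)

theorem exists_mem_Ico (hS : IsCuttingSeq f c S) {k : ℕ} (hk : 1 ≤ k) :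
    ∃ i, k ∈ Ico (S i) (S (i + 1)) := by
  obtain ⟨i, hi, hi'⟩ := hS.strictMono.exists_between_of_tendsto_atTop
    hS.strictMono.tendsto_atTop (x := k + 1) (by rw [hS.1]; omega)
  exact ⟨i, by omega, by omega⟩

theorem critPreimages_nonempty (hS : IsCuttingSeq f c S) (hmaps : MapsTo f (Icc 0 1) (Icc 0 1))
    {k : ℕ} (hk : 1 ≤ k) : (critPreimages f c k).Nonempty := by
  obtain ⟨i, rfl⟩ := Nat.exists_eq_add_of_le' hk
  obtain ⟨x, hx, hfx⟩ := (hS.2 i).1.2.1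
  have hle : i + 1 ≤ S (i + 1) := hS.strictMono.id_le (i + 1)
  refine ⟨f^[S (i + 1) - (i + 1)] x, hmaps.iterate _ hx, ?_⟩
  rwa [← Function.iterate_add_apply, Nat.add_sub_cancel' hle]

theorem preimDist_le_of_mem_Ico (hS : IsCuttingSeq f c S) (hmaps : MapsTo f (Icc 0 1) (Icc 0 1))
    {i k : ℕ} (hk : k ∈ Ico (S i) (S (i + 1))) : preimDist f c (S i) ≤ preimDist f c k := by
  by_contra! hlt
  exact hk.2.not_ge
    ((hS.2 i).2 ⟨hk.1, hS.critPreimages_nonempty hmaps ((hS.one_le i).trans hk.1), hlt⟩)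

theorem preimDist_lt_of_lt (hS : IsCuttingSeq f c S) (hmaps : MapsTo f (Icc 0 1) (Icc 0 1))
    {j n : ℕ} (hj : 1 ≤ j) (hjn : j < S n) : preimDist f c (S n) < preimDist f c j := by
  obtain ⟨i, hi⟩ := hS.exists_mem_Ico hj
  have hin : i < n := hS.strictMono.lt_iff_lt.mp (hi.1.trans_lt hjn)
  exact (hS.strictAnti_preimDist hin).trans_le (hS.preimDist_le_of_mem_Ico hmaps hi)

theorem add_preimDist_mem (hS : IsCuttingSeq f c S) (hf : IsUnimodal f c)
    (hs : SymmetricAbout f c) {k : ℕ} (hk : 1 ≤ k) :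
    c + preimDist f c k ∈ critPreimages f c k := by
  obtain ⟨x, hx, hxd⟩ := hf.exists_abs_sub_eq_preimDist (hS.critPreimages_nonempty hf.2.1 hk)
  rw [← hxd]
  exact ⟨hf.add_abs_sub_mem_Icc hs hx.1, (hf.iterate_add_abs_sub hs hx.1 hk).trans hx.2⟩

theorem strictMonoOn_or_strictAntiOn_iterate (hS : IsCuttingSeq f c S) (hf : IsUnimodal f c)
    (hs : SymmetricAbout f c) (n : ℕ) :
    StrictMonoOn f^[S n] (Icc c (c + preimDist f c (S n))) ∨
      StrictAntiOn f^[S n] (Icc c (c + preimDist f c (S n))) := by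
  have hJ01 : Icc c (c + preimDist f c (S n)) ⊆ Icc 0 1 :=
    Icc_subset_Icc hf.mem_Icc.1 (hS.add_preimDist_mem hf hs (hS.one_le n)).1.2
  refine hf.strictMonoOn_or_strictAntiOn_iterate fun i hi => ?_
  rcases Nat.eq_zero_or_pos i with rfl | hi0
  · exact Or.inr fun x hx => ⟨hx.1, (hJ01 hx).2⟩
  -- an earlier return to `c` would give a preimage closer to `c` than the cutting time allows
  refine hf.mapsTo_iterate_Icc_left_or_right isPreconnected_Icc hJ01 fun x hx hxc => ?_
  have hdist : |x - c| ≤ preimDist f c (S n) := by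
    rw [abs_of_nonneg (sub_nonneg.mpr hx.1)]
    linarith [hx.2]
  exact (hS.preimDist_lt_of_lt hf.2.1 hi0 hi).not_ge ((preimDist_le ⟨hJ01 hx, hxc⟩).trans hdist)

theorem injOn_iterate (hS : IsCuttingSeq f c S) (hf : IsUnimodal f c) (hs : SymmetricAbout f c)
    (n : ℕ) : InjOn f^[S n] (Icc c (c + preimDist f c (S n))) :=
  (hS.strictMonoOn_or_strictAntiOn_iterate hf hs n).elim StrictMonoOn.injOn StrictAntiOn.injOn

theorem iterate_mem_uIcc (hS : IsCuttingSeq f c S) (hf : IsUnimodal f c)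
    (hs : SymmetricAbout f c) {n : ℕ} {q p : ℝ} (hq : q ∈ Icc c p)
    (hp : p ≤ c + preimDist f c (S n)) : f^[S n] q ∈ uIcc (f^[S n] c) (f^[S n] p) := by
  have hsub : Icc c p ⊆ Icc c (c + preimDist f c (S n)) := Icc_subset_Icc_right hp
  rcases hS.strictMonoOn_or_strictAntiOn_iterate hf hs n with h | h
  · exact Icc_subset_uIcc ((h.monotoneOn.mono hsub).mapsTo_Icc hq)
  · exact Icc_subset_uIcc' ((h.antitoneOn.mono hsub).mapsTo_Icc hq)

theorem iterate_mem_uIcc_of_abs_sub_le (hS : IsCuttingSeq f c S) (hf : IsUnimodal f c)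
    (hs : SymmetricAbout f c) {n : ℕ} {x y : ℝ} (hx : x ∈ Icc (0 : ℝ) 1)
    (hy : y ∈ Icc (0 : ℝ) 1) (hxy : |x - c| ≤ |y - c|) (hyn : |y - c| ≤ preimDist f c (S n)) :
    f^[S n] x ∈ uIcc (f^[S n] c) (f^[S n] y) := by
  rw [← hf.iterate_add_abs_sub hs hx (hS.one_le n), ← hf.iterate_add_abs_sub hs hy (hS.one_le n)]
  exact hS.iterate_mem_uIcc hf hs ⟨by linarith [abs_nonneg (x - c)], by linarith⟩ (by linarith)

end IsCuttingSeq

namespace IsFibonacciMap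

theorem preimDist_lt_abs_iterate_sub (hf : IsFibonacciMap f c) (n : ℕ) :
    preimDist f c (fibS n) < |f^[fibS (n + 1)] c - c| := by
  obtain ⟨hu, hs, hS⟩ := hf
  have hq := hS.add_preimDist_mem hu hs (hS.one_le (n + 2))
  have hp := hS.add_preimDist_mem hu hs (hS.one_le (n + 1))
  have hqc : c < c + preimDist f c (fibS (n + 2)) := lt_add_of_pos_right c (hS.preimDist_pos _)
  have hqp : c + preimDist f c (fibS (n + 2)) ≤ c + preimDist f c (fibS (n + 1)) := by
    linarith [hS.preimDist_succ_lt (n + 1)]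
  set w := f^[fibS (n + 1)] (c + preimDist f c (fibS (n + 2)))
  have hw : f^[fibS n] w = c := by
    rw [← Function.iterate_add_apply, add_comm]
    exact hq.2
  have hwu : w ∈ uIcc (f^[fibS (n + 1)] c) c := by
    have := hS.iterate_mem_uIcc hu hs ⟨hqc.le, hqp⟩ le_rfl
    rwa [hp.2] at this
  have hwd : w ≠ f^[fibS (n + 1)] c := fun h =>
    hqc.ne' (hS.injOn_iterate hu hs (n + 1) ⟨hqc.le, hqp⟩ ⟨le_rfl, hqp.trans' hqc.le⟩ h)
  calc preimDist f c (fibS n) ≤ |w - c| := preimDist_le ⟨hu.2.1.iterate _ hq.1, hw⟩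
    _ < |f^[fibS (n + 1)] c - c| := abs_sub_lt_of_mem_uIcc_of_ne hwu hwd

theorem abs_iterate_sub_lt_preimDist (hf : IsFibonacciMap f c) (n : ℕ) :
    |f^[fibS (n + 2)] c - c| < preimDist f c (fibS n) := by
  obtain ⟨hu, hs, hS⟩ := hf
  by_contra! hle
  obtain ⟨w, hwu, hwE⟩ := exists_mem_uIcc_abs_sub_eq (hS.preimDist_pos n).le hle
  have hw01 : w ∈ Icc (0 : ℝ) 1 := uIcc_subset_Icc (hu.iterate_mem_Icc _) hu.mem_Icc hwu
  have hw : f^[fibS n] w = c := by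
    rw [← hu.iterate_add_abs_sub hs hw01 (hS.one_le n), hwE]
    exact (hS.add_preimDist_mem hu hs (hS.one_le n)).2
  -- pull `w` back along the branch of `f^[S (n+2)]` to a point closer to `c` than `c₋ₛ₍ₙ₊₂₎`
  set e := preimDist f c (fibS (n + 2))
  have hp := hS.add_preimDist_mem hu hs (hS.one_le (n + 2))
  have hcont : ContinuousOn f^[fibS (n + 2)] (uIcc c (c + e)) :=
    (hu.continuousOn_iterate _).mono (uIcc_subset_Icc hu.mem_Icc hp.1)
  obtain ⟨z, hz, hzw⟩ := intermediate_value_uIcc hcont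
    (show w ∈ uIcc (f^[fibS (n + 2)] c) (f^[fibS (n + 2)] (c + e)) by rwa [hp.2])
  rw [uIcc_of_le (le_add_of_nonneg_right (preimDist_nonneg _))] at hz
  have hzp : z ≠ c + e := by
    rintro rfl
    rw [hp.2] at hzw
    rw [← hzw, sub_self, abs_zero] at hwE
    exact (hS.preimDist_pos n).ne hwE
  have hzc : |z - c| < e := by
    rw [abs_of_nonneg (sub_nonneg.mpr hz.1)]
    linarith [lt_of_le_of_ne hz.2 hzp]
  have hz' : z ∈ critPreimages f c (fibS n + fibS (n + 2)) :=
    ⟨uIcc_subset_Icc hu.mem_Icc hp.1 (Icc_subset_uIcc hz),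
      by rw [Function.iterate_add_apply, hzw, hw]⟩
  have hk : fibS n + fibS (n + 2) ∈ Ico (fibS (n + 2)) (fibS (n + 3)) := by
    have hlt : fibS n < fibS (n + 1) := hS.strictMono (Nat.lt_add_one n)
    have hrec : fibS (n + 3) = fibS (n + 2) + fibS (n + 1) := rfl
    exact ⟨by omega, by omega⟩
  linarith [hS.preimDist_le_of_mem_Ico hu.2.1 hk, preimDist_le hz']

theorem abs_iterate_sub_le_of_le (hf : IsFibonacciMap f c) {i j : ℕ} (hi : 1 ≤ i) (hij : i ≤ j) :
    |f^[fibS j] c - c| ≤ |f^[fibS i] c - c| := by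
  have hanti : StrictAnti fun n => |f^[fibS (n + 1)] c - c| := strictAnti_nat_of_succ_lt fun n =>
    (hf.abs_iterate_sub_lt_preimDist n).trans (hf.preimDist_lt_abs_iterate_sub n)
  obtain ⟨i, rfl⟩ := Nat.exists_eq_add_of_le' hi
  obtain ⟨j, rfl⟩ := Nat.exists_eq_add_of_le' (hi.trans hij)
  exact hanti.antitone (by omega)

theorem iterate_fibS_add_mem_uIcc (hf : IsFibonacciMap f c) (n : ℕ) :
    f^[fibS n + fibS (n + 2)] c ∈ uIcc (f^[fibS n] c) c := by
  have hB := hf.abs_iterate_sub_lt_preimDist n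
  obtain ⟨hu, hs, hS⟩ := hf
  have hp := hS.add_preimDist_mem hu hs (hS.one_le n)
  have hpc : |c + preimDist f c (fibS n) - c| = preimDist f c (fibS n) := by
    rw [add_sub_cancel_left, abs_of_nonneg (preimDist_nonneg _)]
  have := hS.iterate_mem_uIcc_of_abs_sub_le hu hs (hu.iterate_mem_Icc (fibS (n + 2))) hp.1
    (hB.le.trans_eq hpc.symm) hpc.le
  rwa [hp.2, ← Function.iterate_add_apply] at this

theorem iterate_fibS_mem_uIcc_of_abs_sub_le (hf : IsFibonacciMap f c) {n : ℕ} {x : ℝ}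
    (hx : x ∈ Icc (0 : ℝ) 1) (h : |x - c| ≤ |f^[fibS (n + 2)] c - c|) :
    f^[fibS n] x ∈ uIcc (f^[fibS n] c) (f^[fibS n + fibS (n + 2)] c) := by
  rw [Function.iterate_add_apply]
  exact hf.2.2.iterate_mem_uIcc_of_abs_sub_le hf.1 hf.2.1 hx (hf.1.iterate_mem_Icc _) h
    (hf.abs_iterate_sub_lt_preimDist n).le

theorem iterate_mem_uIcc_of_isFibExpansion (hf : IsFibonacciMap f c) {l : List ℕ} {m n : ℕ}
    (hl : IsFibExpansion l m) (hn : l.head? = some n) :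
    f^[m] c ∈ uIcc (f^[fibS n] c) (f^[fibS n + fibS (n + 2)] c) := by
  induction l generalizing m n with
  | nil => simp at hn
  | cons k t ih =>
    obtain ⟨-, hchain, rfl⟩ := hl
    obtain rfl : k = n := Option.some.inj hn
    cases t with
    | nil => simp
    | cons k₂ t =>
      obtain ⟨hk₂, htail⟩ := List.isChain_cons_cons.mp hchain
      have hx := ih ⟨List.cons_ne_nil _ _, htail, rfl⟩ rfl
      have hxc : |f^[((k₂ :: t).map fibS).sum] c - c| ≤ |f^[fibS k₂] c - c| := by
        refine abs_sub_left_of_mem_uIcc ?_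
        rw [uIcc_comm]
        exact uIcc_subset_uIcc left_mem_uIcc (hf.iterate_fibS_add_mem_uIcc k₂) hx
      rw [List.map_cons, List.sum_cons,
        Function.iterate_add_apply f (fibS k) ((k₂ :: t).map fibS).sum]
      exact hf.iterate_fibS_mem_uIcc_of_abs_sub_le (hf.1.iterate_mem_Icc _)
        (hxc.trans (hf.abs_iterate_sub_le_of_le (by omega) hk₂))

end IsFibonacciMap

/-- For a Fibonacci map, the forward critical orbit is contained in the union of the
closed intervals with endpoints `d_n = f^{S_n}(c)` and `y_n = f^{S_n+S_{n+2}}(c)`: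
every `f^m(c)` with `m ≥ 1` lies in some such interval, and one may take `n` so that
`S_n` is the leading summand of the Fibonacci sum expression of `m`. -/
theorem fibonacci_orbit_in_d_y_intervals (f : ℝ → ℝ) (c : ℝ)
    (hf : IsFibonacciMap f c) :
    (∀ m : ℕ, 1 ≤ m →
      ∃ n : ℕ, f^[m] c ∈ Set.uIcc (f^[fibS n] c) (f^[fibS n + fibS (n + 2)] c)) ∧
    (∀ (m n : ℕ) (l : List ℕ), IsFibExpansion l m → l.head? = some n →
      f^[m] c ∈ Set.uIcc (f^[fibS n] c) (f^[fibS n + fibS (n + 2)] c)) := by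
  refine ⟨fun m hm => ?_, fun m n l hl hn => hf.iterate_mem_uIcc_of_isFibExpansion hl hn⟩
  obtain ⟨l, hl⟩ := exists_isFibExpansion hm
  obtain ⟨n, t, rfl⟩ := List.exists_cons_of_ne_nil hl.1
  exact ⟨n, hf.iterate_mem_uIcc_of_isFibExpansion hl rfl⟩

end
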